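/- arXiv:2201.06619 — 3 statements merged into one kernel-verified Lean document; each statement's English description precedes it below -/
import Mathlib

section
/- Bretagnolle-Huber inequality: for probability measures P and Q on a finite (or measurable) space, the total variation distance satisfies TV(P, Q) ≤ sqrt(1 - exp(-KL(P || Q))). -/
open Finset ENNReal

/-- Kullback–Leibler divergence between discrete distributions on a finite space,
taking the value `⊤` when absolute continuity fails. -/
noncomputable def KLdiv {β : Type*} [Fintype β] (P Q : β → ℝ) : ℝ≥0∞ :=
  if ∀ b, Q b = 0 → P b = 0 then
    ENNReal.ofReal (∑ b, P b * Real.log (P b / Q b))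
  else ⊤

/-- `exp(-x)` for `x : ℝ≥0∞`, with `exp(-⊤) = 0`. -/
noncomputable def expNeg (x : ℝ≥0∞) : ℝ :=
  if x = ⊤ then 0 else Real.exp (-x.toReal)

/-- Jensen step: `exp(-KL) ≤ (∑ √(P·Q))²` under absolute continuity. -/
lemma exp_neg_sum_le_sq {β : Type*} [Fintype β]
    (P Q : β → ℝ) (hP : ∀ b, 0 ≤ P b) (hQ : ∀ b, 0 ≤ Q b)
    (hPsum : ∑ b, P b = 1) (hac : ∀ b, Q b = 0 → P b = 0) :
    Real.exp (-∑ b, P b * Real.log (P b / Q b)) ≤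
      (∑ b, Real.sqrt (P b * Q b)) ^ 2 := by
  classical
  set T : Finset β := Finset.univ.filter (fun b => P b ≠ 0) with hT
  have hTmem : ∀ b ∈ T, P b ≠ 0 := fun b hb => (Finset.mem_filter.mp hb).2
  have hTpos : ∀ b ∈ T, 0 < P b := fun b hb => (hP b).lt_of_ne' (hTmem b hb)
  have hQpos : ∀ b ∈ T, 0 < Q b := by
    intro b hb
    rcases (hQ b).lt_or_eq with h | h
    · exact h
    · exact absurd (hac b h.symm) (hTmem b hb)
  have hsub : ∀ b ∈ Finset.univ, b ∉ T → P b = 0 := by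
    intro b _ hb
    by_contra h
    exact hb (Finset.mem_filter.mpr ⟨Finset.mem_univ _, h⟩)
  have hwsum : ∑ b ∈ T, P b = 1 := by
    rw [← hPsum]
    exact Finset.sum_subset (Finset.subset_univ _) hsub
  -- the sum of sqrt(PQ) restricted to T
  have hS : ∑ b ∈ T, P b * Real.sqrt (Q b / P b) = ∑ b, Real.sqrt (P b * Q b) := by
    rw [← Finset.sum_subset (Finset.subset_univ T)
      (fun b hb hbn => by rw [hsub b hb hbn]; simp)]
    refine Finset.sum_congr rfl fun b hb => ?_
    have hp := hTpos b hb
    rw [Real.sqrt_div (hQ b), Real.sqrt_mul (hP b)]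
    have h1 : P b * (Real.sqrt (Q b) / Real.sqrt (P b))
        = (P b / Real.sqrt (P b)) * Real.sqrt (Q b) := by ring
    rw [h1, Real.div_sqrt]
  -- the log sum restricted to T
  have hlog : ∑ b ∈ T, P b * Real.log (Real.sqrt (Q b / P b))
      = -(1/2) * ∑ b, P b * Real.log (P b / Q b) := by
    rw [← Finset.sum_subset (Finset.subset_univ T)
      (fun b hb hbn => by rw [hsub b hb hbn]; simp), Finset.mul_sum]
    refine Finset.sum_congr rfl fun b hb => ?_
    have hp := hTpos b hb
    have hq := hQpos b hb
    rw [Real.log_sqrt (div_nonneg (hQ b) (hP b)),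
      Real.log_div hq.ne' hp.ne', Real.log_div hp.ne' hq.ne']
    ring
  have hjensen := convexOn_exp.map_sum_le (t := T) (w := P)
    (p := fun b => Real.log (Real.sqrt (Q b / P b)))
    (fun b hb => hP b) hwsum (fun b _ => Set.mem_univ _)
  simp only [smul_eq_mul] at hjensen
  have hexp : ∀ b ∈ T, Real.exp (Real.log (Real.sqrt (Q b / P b)))
      = Real.sqrt (Q b / P b) := by
    intro b hb
    exact Real.exp_log (Real.sqrt_pos.mpr (div_pos (hQpos b hb) (hTpos b hb)))
  have hrhs : ∑ x ∈ T, P x * Real.exp (Real.log (Real.sqrt (Q x / P x)))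
      = ∑ b, Real.sqrt (P b * Q b) := by
    rw [← hS]; exact Finset.sum_congr rfl fun b hb => by rw [hexp b hb]
  rw [hlog, hrhs] at hjensen
  have hSnn : (0:ℝ) ≤ ∑ b, Real.sqrt (P b * Q b) :=
    Finset.sum_nonneg fun b _ => Real.sqrt_nonneg _
  calc Real.exp (-∑ b, P b * Real.log (P b / Q b))
      = Real.exp (-(1/2) * ∑ b, P b * Real.log (P b / Q b)) ^ 2 := by
        rw [← Real.exp_nat_mul]; congr 1; push_cast; ring
    _ ≤ (∑ b, Real.sqrt (P b * Q b)) ^ 2 :=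
        pow_le_pow_left₀ (Real.exp_nonneg _) hjensen 2

/-- Bretagnolle–Huber inequality: the total variation distance
`sup_A |P(A) - Q(A)|` is at most `√(1 - exp(-KL(P‖Q)))`. -/
theorem bretagnolle_huber
    {β : Type*} [Fintype β]
    (P Q : β → ℝ) (hP : ∀ b, 0 ≤ P b) (hQ : ∀ b, 0 ≤ Q b)
    (hPsum : ∑ b, P b = 1) (hQsum : ∑ b, Q b = 1) :
    (⨆ A : Finset β, |∑ b ∈ A, P b - ∑ b ∈ A, Q b|) ≤
      Real.sqrt (1 - expNeg (KLdiv P Q)) := by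
  classical
  set t : ℝ := (∑ b, |P b - Q b|) / 2 with ht
  have htnn : 0 ≤ t := by positivity
  -- each set's discrepancy is at most t
  have hA : ∀ A : Finset β, |∑ b ∈ A, P b - ∑ b ∈ A, Q b| ≤ t := by
    intro A
    have hsplitP : ∑ b ∈ A, P b + ∑ b ∈ Aᶜ, P b = 1 := by
      rw [Finset.sum_add_sum_compl]; exact hPsum
    have hsplitQ : ∑ b ∈ A, Q b + ∑ b ∈ Aᶜ, Q b = 1 := by
      rw [Finset.sum_add_sum_compl]; exact hQsum
    have h1 : |∑ b ∈ A, P b - ∑ b ∈ A, Q b| ≤ ∑ b ∈ A, |P b - Q b| := by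
      rw [← Finset.sum_sub_distrib]
      exact Finset.abs_sum_le_sum_abs _ _
    have h2 : |∑ b ∈ A, P b - ∑ b ∈ A, Q b| ≤ ∑ b ∈ Aᶜ, |P b - Q b| := by
      have : ∑ b ∈ A, P b - ∑ b ∈ A, Q b = -(∑ b ∈ Aᶜ, P b - ∑ b ∈ Aᶜ, Q b) := by
        linarith
      rw [this, abs_neg, ← Finset.sum_sub_distrib]
      exact Finset.abs_sum_le_sum_abs _ _
    have htot : ∑ b ∈ A, |P b - Q b| + ∑ b ∈ Aᶜ, |P b - Q b| = ∑ b, |P b - Q b| :=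
      Finset.sum_add_sum_compl _ _
    rw [ht]; linarith
  -- Cauchy–Schwarz: S² ≤ 1 - t²
  set S : ℝ := ∑ b, Real.sqrt (P b * Q b) with hSdef
  have hmin : ∑ b, min (P b) (Q b) = 1 - t := by
    have h : ∀ b, min (P b) (Q b) = ((P b + Q b) - |P b - Q b|) / 2 := by
      intro b
      rcases le_total (P b) (Q b) with h | h
      · rw [min_eq_left h, abs_of_nonpos (by linarith)]; ring
      · rw [min_eq_right h, abs_of_nonneg (by linarith)]; ring
    simp_rw [h]
    rw [← Finset.sum_div, Finset.sum_sub_distrib, Finset.sum_add_distrib, hPsum, hQsum]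
    simp only [ht]; ring
  have hmax : ∑ b, max (P b) (Q b) = 1 + t := by
    have h : ∀ b, max (P b) (Q b) = ((P b + Q b) + |P b - Q b|) / 2 := by
      intro b
      rcases le_total (P b) (Q b) with h | h
      · rw [max_eq_right h, abs_of_nonpos (by linarith)]; ring
      · rw [max_eq_left h, abs_of_nonneg (by linarith)]; ring
    simp_rw [h]
    rw [← Finset.sum_div, Finset.sum_add_distrib, Finset.sum_add_distrib, hPsum, hQsum]
    simp only [ht]; ring
  have hCS : S ^ 2 ≤ 1 - t ^ 2 := by
    have h := Finset.sum_mul_sq_le_sq_mul_sq Finset.univ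
      (fun b => Real.sqrt (min (P b) (Q b))) (fun b => Real.sqrt (max (P b) (Q b)))
    have h1 : ∀ b, Real.sqrt (min (P b) (Q b)) * Real.sqrt (max (P b) (Q b))
        = Real.sqrt (P b * Q b) := by
      intro b
      rw [← Real.sqrt_mul (le_min (hP b) (hQ b)), min_mul_max]
    have h2 : ∀ b, Real.sqrt (min (P b) (Q b)) ^ 2 = min (P b) (Q b) := fun b =>
      Real.sq_sqrt (le_min (hP b) (hQ b))
    have h3 : ∀ b, Real.sqrt (max (P b) (Q b)) ^ 2 = max (P b) (Q b) := fun b =>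
      Real.sq_sqrt (le_max_of_le_left (hP b))
    simp_rw [h1, h2, h3] at h
    rw [hmin, hmax] at h
    calc S ^ 2 ≤ (1 - t) * (1 + t) := h
      _ = 1 - t ^ 2 := by ring
  have hSnn : (0:ℝ) ≤ S := Finset.sum_nonneg fun b _ => Real.sqrt_nonneg _
  -- main bound: t ≤ √(1 - expNeg (KLdiv P Q))
  have hexpNeg_le : expNeg (KLdiv P Q) ≤ 1 := by
    unfold expNeg
    split
    · norm_num
    · exact Real.exp_le_one_iff.mpr (neg_nonpos.mpr ENNReal.toReal_nonneg)
  have hmain : t ≤ Real.sqrt (1 - expNeg (KLdiv P Q)) := by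
    rw [Real.le_sqrt htnn]
    · unfold KLdiv expNeg
      by_cases hac : ∀ b, Q b = 0 → P b = 0
      · rw [if_pos hac, if_neg ENNReal.ofReal_ne_top, ENNReal.toReal_ofReal']
        have hkey := exp_neg_sum_le_sq P Q hP hQ hPsum hac
        have hmono : Real.exp (-(max (∑ b, P b * Real.log (P b / Q b)) 0))
            ≤ Real.exp (-∑ b, P b * Real.log (P b / Q b)) :=
          Real.exp_le_exp.mpr (neg_le_neg (le_max_left _ _))
        linarith
      · rw [if_neg hac, if_pos rfl]
        nlinarith [sq_nonneg S, hCS]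
    · linarith
  refine ciSup_le fun A => (hA A).trans hmain
end

section
/- If P and Q are probability measures on a finite space and A is any event, then |P(A) - Q(A)| ≤ sqrt(1 - exp(-KL(P || Q))). In particular, P(A) ≥ Q(A) - sqrt(1 - exp(-KL(Q || P))). -/
open Finset ENNReal

/-!
Both sides are compared with the Bhattacharyya coefficient `BC = ∑ b, √(P b * Q b)`.
Jensen's inequality for `exp`, with weights `P` and points `log (Q / P) / 2`, gives
`exp (-KL(P‖Q) / 2) ≤ BC`. By Cauchy–Schwarz, `BC² ≤ m * (2 - m)` where `m = ∑ b, min (P b) (Q b)`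
is the overlap of `P` and `Q`, and `m ≤ 1 - |P(A) - Q(A)|` for every event `A`, so
`BC² ≤ 1 - (1 - m)² ≤ 1 - (P(A) - Q(A))²`.
-/

lemma sq_sum_sqrt_mul_le_sum_min_mul_sum_max {ι : Type*} (s : Finset ι) (P Q : ι → ℝ)
    (hP : ∀ b, 0 ≤ P b) (hQ : ∀ b, 0 ≤ Q b) :
    (∑ b ∈ s, √(P b * Q b)) ^ 2 ≤ (∑ b ∈ s, min (P b) (Q b)) * ∑ b ∈ s, max (P b) (Q b) :=
  sum_sq_le_sum_mul_sum_of_sq_le_mul s (fun b _ => le_min (hP b) (hQ b))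
    (fun b _ => le_max_of_le_left (hP b))
    (fun b _ => by rw [Real.sq_sqrt (mul_nonneg (hP b) (hQ b)), min_mul_max])

lemma mul_exp_log_div_div_two_eq_sqrt_mul {p q : ℝ} (hp : 0 ≤ p) (hq : 0 ≤ q)
    (hqp : q = 0 → p = 0) : p * Real.exp (Real.log (q / p) / 2) = √(p * q) := by
  rcases hp.eq_or_lt with rfl | hp
  · simp
  have hq : 0 < q := hq.lt_of_ne fun h => hp.ne' (hqp h.symm)
  have hsqrt : Real.exp (Real.log (q / p) / 2) = √(q / p) := by
    rw [Real.sqrt_eq_rpow, Real.rpow_def_of_pos (div_pos hq hp), div_eq_mul_one_div]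
  rw [hsqrt, ← Real.sqrt_sq hp.le, ← Real.sqrt_mul (sq_nonneg p), Real.sqrt_sq hp.le]
  congr 1
  field_simp

section

variable {β : Type*} [Fintype β]

lemma exp_neg_sum_mul_log_div_le_sq_sum_sqrt_mul (P Q : β → ℝ) (hP : ∀ b, 0 ≤ P b)
    (hQ : ∀ b, 0 ≤ Q b) (hPsum : ∑ b, P b = 1) (hQP : ∀ b, Q b = 0 → P b = 0) :
    Real.exp (-∑ b, P b * Real.log (P b / Q b)) ≤ (∑ b, √(P b * Q b)) ^ 2 := by
  have jensen := convexOn_exp.map_sum_le (t := univ) (w := P)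
    (p := fun b => Real.log (Q b / P b) / 2) (fun b _ => hP b) hPsum (fun b _ => Set.mem_univ _)
  have hmean : ∑ b, P b • (Real.log (Q b / P b) / 2) = -(∑ b, P b * Real.log (P b / Q b)) / 2 := by
    rw [neg_div, sum_div, ← sum_neg_distrib]
    refine sum_congr rfl fun b _ => ?_
    rw [smul_eq_mul, ← inv_div (P b), Real.log_inv]
    ring
  rw [hmean] at jensen
  simp only [smul_eq_mul, mul_exp_log_div_div_two_eq_sqrt_mul (hP _) (hQ _) (hQP _)] at jensen
  calc Real.exp (-∑ b, P b * Real.log (P b / Q b))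
      = Real.exp (-(∑ b, P b * Real.log (P b / Q b)) / 2) ^ 2 := by
        rw [← Real.exp_nat_mul]; ring_nf
    _ ≤ (∑ b, √(P b * Q b)) ^ 2 := pow_le_pow_left₀ (Real.exp_pos _).le jensen 2

lemma expNeg_KLdiv_le_sq_sum_sqrt_mul (P Q : β → ℝ) (hP : ∀ b, 0 ≤ P b)
    (hQ : ∀ b, 0 ≤ Q b) (hPsum : ∑ b, P b = 1) :
    expNeg (KLdiv P Q) ≤ (∑ b, √(P b * Q b)) ^ 2 := by
  unfold KLdiv
  split_ifs with hQP
  · rw [expNeg, if_neg ofReal_ne_top, toReal_ofReal']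
    refine le_trans (Real.exp_le_exp.2 ?_)
      (exp_neg_sum_mul_log_div_le_sq_sum_sqrt_mul P Q hP hQ hPsum hQP)
    simp
  · simpa [expNeg] using sq_nonneg _

lemma sum_min_le_sum_add_sum_compl [DecidableEq β] (P Q : β → ℝ) (A : Finset β) :
    ∑ b, min (P b) (Q b) ≤ ∑ b ∈ A, Q b + ∑ b ∈ Aᶜ, P b := by
  rw [← sum_add_sum_compl A]
  exact add_le_add (sum_le_sum fun b _ => min_le_right _ _) (sum_le_sum fun b _ => min_le_left _ _)

lemma sq_sum_sqrt_mul_le_one_sub_sq (P Q : β → ℝ) (hP : ∀ b, 0 ≤ P b) (hQ : ∀ b, 0 ≤ Q b)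
    (hPsum : ∑ b, P b = 1) (hQsum : ∑ b, Q b = 1) (A : Finset β) :
    (∑ b, √(P b * Q b)) ^ 2 ≤ 1 - (∑ b ∈ A, P b - ∑ b ∈ A, Q b) ^ 2 := by
  classical
  set m := ∑ b, min (P b) (Q b)
  have hsum_max : ∑ b, max (P b) (Q b) = 2 - m := by
    have := congrArg₂ (· + ·) hPsum hQsum
    simp only [← sum_add_distrib, ← min_add_max (P _)] at this
    rw [sum_add_distrib] at this
    linarith
  have hPA := sum_add_sum_compl A P
  have hQA := sum_add_sum_compl A Q
  have hm₁ := sum_min_le_sum_add_sum_compl P Q A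
  have hm₂ : m ≤ ∑ b ∈ A, P b + ∑ b ∈ Aᶜ, Q b := by
    simpa only [m, min_comm] using sum_min_le_sum_add_sum_compl Q P A
  calc (∑ b, √(P b * Q b)) ^ 2 ≤ m * (2 - m) :=
        hsum_max ▸ sq_sum_sqrt_mul_le_sum_min_mul_sum_max univ P Q hP hQ
    _ ≤ 1 - (∑ b ∈ A, P b - ∑ b ∈ A, Q b) ^ 2 := by nlinarith

lemma abs_sum_sub_sum_le_sqrt_one_sub_expNeg_KLdiv (P Q : β → ℝ) (hP : ∀ b, 0 ≤ P b)
    (hQ : ∀ b, 0 ≤ Q b) (hPsum : ∑ b, P b = 1) (hQsum : ∑ b, Q b = 1) (A : Finset β) :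
    |∑ b ∈ A, P b - ∑ b ∈ A, Q b| ≤ √(1 - expNeg (KLdiv P Q)) := by
  refine Real.abs_le_sqrt ?_
  linarith [expNeg_KLdiv_le_sq_sum_sqrt_mul P Q hP hQ hPsum,
    sq_sum_sqrt_mul_le_one_sub_sq P Q hP hQ hPsum hQsum A]

end

/-- For any event `A`, `|P(A) - Q(A)| ≤ √(1 - exp(-KL(P‖Q)))`; in particular
`P(A) ≥ Q(A) - √(1 - exp(-KL(Q‖P)))`. -/
theorem abs_sub_le_sqrt_one_sub_exp_neg_KL
    {β : Type*} [Fintype β]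
    (P Q : β → ℝ) (hP : ∀ b, 0 ≤ P b) (hQ : ∀ b, 0 ≤ Q b)
    (hPsum : ∑ b, P b = 1) (hQsum : ∑ b, Q b = 1) :
    (∀ A : Finset β,
      |∑ b ∈ A, P b - ∑ b ∈ A, Q b| ≤ Real.sqrt (1 - expNeg (KLdiv P Q))) ∧
    (∀ A : Finset β,
      ∑ b ∈ A, P b ≥ ∑ b ∈ A, Q b - Real.sqrt (1 - expNeg (KLdiv Q P))) := by
  refine ⟨abs_sum_sub_sum_le_sqrt_one_sub_expNeg_KLdiv P Q hP hQ hPsum hQsum, fun A => ?_⟩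
  obtain ⟨-, hle⟩ := abs_le.1 (abs_sum_sub_sum_le_sqrt_one_sub_expNeg_KLdiv Q P hQ hP hQsum hPsum A)
  linarith
end

section
/- Survival probability bound: let p ∈ [0,1), let Q be a probability distribution on ℕ, let v ∈ (0,1] and let m ≥ 0 satisfy ∑_{t} (t+1) Q(t) ≤ m / v. Then v · ∑_{t=0}^∞ Q(t) (1-p)^{t+1} ≥ v · (1-p)^{m/v}. -/
/-- Survival probability bound: if `Q` is a probability distribution on `ℕ`,
`v ∈ (0,1]`, `m ≥ 0`, and `∑ₜ (t+1) Q(t) ≤ m / v`, then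
`v · ∑ₜ Q(t) (1-p)^(t+1) ≥ v · (1-p)^(m/v)`. -/
theorem survival_probability_bound
    (p : ℝ) (hp0 : 0 ≤ p) (hp1 : p < 1)
    (Q : ℕ → ℝ) (hQ : ∀ t, 0 ≤ Q t) (hQsum : ∑' t, Q t = 1)
    (hQsummable : Summable Q)
    (v : ℝ) (hv0 : 0 < v) (hv1 : v ≤ 1)
    (m : ℝ) (hm0 : 0 ≤ m)
    (hmean_summable : Summable (fun t : ℕ => ((t : ℝ) + 1) * Q t))
    (hmean : ∑' t : ℕ, ((t : ℝ) + 1) * Q t ≤ m / v) :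
    v * (∑' t : ℕ, Q t * (1 - p) ^ (t + 1)) ≥ v * (1 - p) ^ (m / v : ℝ) := by
  have h1p : (0:ℝ) < 1 - p := by linarith
  set c : ℝ := Real.log (1 - p) with hcdef
  have hc : c ≤ 0 := Real.log_nonpos (by linarith) (by linarith)
  have hec : Real.exp c = 1 - p := Real.exp_log h1p
  set μ : ℝ := ∑' t : ℕ, ((t : ℝ) + 1) * Q t with hμdef
  -- the summands
  set f : ℕ → ℝ := fun t => Q t * (1 - p) ^ (t + 1) with hfdef
  set g : ℕ → ℝ := fun t =>
    Real.exp (c * μ) * ((1 - c * μ) * Q t + c * (((t : ℝ) + 1) * Q t)) with hgdef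
  have hfnonneg : ∀ t, 0 ≤ f t := fun t =>
    mul_nonneg (hQ t) (pow_nonneg (le_of_lt h1p) _)
  have hfsummable : Summable f := by
    apply Summable.of_nonneg_of_le hfnonneg _ hQsummable
    intro t
    calc f t ≤ Q t * 1 := by
          apply mul_le_mul_of_nonneg_left _ (hQ t)
          exact pow_le_one₀ (le_of_lt h1p) (by linarith)
      _ = Q t := mul_one _
  have hgsummable : Summable g := by
    apply Summable.mul_left
    exact (hQsummable.mul_left _).add (hmean_summable.mul_left _)
  have hgle : ∀ t, g t ≤ f t := by
    intro t
    have hexp : Real.exp (c * μ) * (1 + (c * ((t : ℝ) + 1) - c * μ))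
        ≤ Real.exp (c * ((t : ℝ) + 1)) := by
      have := Real.add_one_le_exp (c * ((t : ℝ) + 1) - c * μ)
      calc Real.exp (c * μ) * (1 + (c * ((t : ℝ) + 1) - c * μ))
          ≤ Real.exp (c * μ) * Real.exp (c * ((t : ℝ) + 1) - c * μ) := by
            apply mul_le_mul_of_nonneg_left _ (Real.exp_pos _).le
            linarith
        _ = Real.exp (c * ((t : ℝ) + 1)) := by
            rw [← Real.exp_add]; ring_nf
    have hpow : Real.exp (c * ((t : ℝ) + 1)) = (1 - p) ^ (t + 1) := by
      rw [show c * ((t : ℝ) + 1) = ((t : ℕ) + 1 : ℕ) * c by push_cast; ring,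
        Real.exp_nat_mul, hec]
    have hQt := hQ t
    have : Q t * (Real.exp (c * μ) * (1 + (c * ((t : ℝ) + 1) - c * μ)))
        ≤ Q t * (1 - p) ^ (t + 1) := by
      rw [← hpow]
      exact mul_le_mul_of_nonneg_left hexp hQt
    calc g t = Q t * (Real.exp (c * μ) * (1 + (c * ((t : ℝ) + 1) - c * μ))) := by
          simp only [hgdef]; ring
      _ ≤ f t := this
  have hgsum : ∑' t, g t = Real.exp (c * μ) := by
    rw [hgdef, tsum_mul_left, Summable.tsum_add (hQsummable.mul_left _) (hmean_summable.mul_left _),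
      tsum_mul_left, tsum_mul_left, hQsum, ← hμdef]
    ring
  have hkey : Real.exp (c * μ) ≤ ∑' t, f t := by
    rw [← hgsum]
    exact Summable.tsum_le_tsum hgle hgsummable hfsummable
  have hrpow : (1 - p) ^ (m / v : ℝ) = Real.exp (c * (m / v)) := by
    rw [Real.rpow_def_of_pos h1p]
  have hmono : Real.exp (c * (m / v)) ≤ Real.exp (c * μ) := by
    apply Real.exp_le_exp.mpr
    exact mul_le_mul_of_nonpos_left hmean hc
  have : (1 - p) ^ (m / v : ℝ) ≤ ∑' t, f t := by
    rw [hrpow]; exact le_trans hmono hkey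
  exact mul_le_mul_of_nonneg_left this hv0.le
end
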